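/- arXiv:1505.05280 — 9 statements merged into one kernel-verified Lean document; each statement's English description precedes it below -/
import Mathlib

section
/- For every odd natural number k and every real number α, the product ∏_{j=1}^{k} sin(π(2j−1)/(2k) − α) equals 2^{1−k} cos(kα). -/
open Real Finset

/-! Writing `2i sin θ = e^{iθ} - e^{-iθ}` and pulling `e^{-ijπ/n}` out of the `j`-th factor
turns `∏_{j<n} 2i sin (x + jπ/n)` into `∏_{j<n} (a - ζ^j b) = a^n - b^n = 2i sin (n x)`, where
`a = e^{ix}`, `b = e^{-ix}` and `ζ = e^{-2πi/n}` is a primitive `n`-th root of unity; the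
extracted factors contribute `(-i)^(n-1)`. Hence `2^(n-1) ∏_{j<n} sin (x + jπ/n) = sin (n x)`,
and the theorem is the case `n = k`, `x = π/(2k) - α`, where
`sin (k x) = sin (π/2 - k α) = cos (k α)`. -/

theorem IsPrimitiveRoot.prod_range_sub_pow_mul {R : Type*} [CommRing R] [IsDomain R] {ζ : R}
    {n : ℕ} (hζ : IsPrimitiveRoot ζ n) (hn : 0 < n) (x y : R) :
    ∏ i ∈ range n, (x - ζ ^ i * y) = x ^ n - y ^ n := by
  simpa [Polynomial.eval_prod] using
    (congrArg (Polynomial.eval x) (X_pow_sub_C_eq_prod hζ hn (rfl : y ^ n = y ^ n))).symm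

namespace Complex

theorem two_mul_I_mul_sin (z : ℂ) : 2 * I * sin z = exp (z * I) - exp (-z * I) := by
  linear_combination I * two_sin z + (exp (-z * I) - exp (z * I)) * I_sq

theorem prod_exp_neg_mul_pi_div (m : ℕ) :
    ∏ j ∈ range (m + 1), exp (-(j * π / (m + 1)) * I) = (-I) ^ m := by
  have hgauss : (∑ j ∈ range (m + 1), (j : ℂ)) * 2 = (m + 1) * m := by
    have h := sum_range_id_mul_two (m + 1)
    rw [Nat.add_sub_cancel] at h
    simpa using congrArg (Nat.cast : ℕ → ℂ) h
  rw [← exp_sum, ← exp_neg_pi_div_two_mul_I, ← exp_nat_mul]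
  congr 1
  simp only [← sum_mul, sum_neg_distrib, ← sum_div]
  field_simp
  linear_combination -hgauss

theorem prod_sin_add_mul_pi_div (m : ℕ) (z : ℂ) :
    2 ^ m * ∏ j ∈ range (m + 1), sin (z + j * π / (m + 1)) = sin ((m + 1) * z) := by
  have hζ : IsPrimitiveRoot (exp (-(2 * π * I / (m + 1)))) (m + 1) := by
    rw [exp_neg]; exact_mod_cast (isPrimitiveRoot_exp (m + 1) m.succ_ne_zero).inv
  have hfactor (j : ℕ) : exp (-(j * π / (m + 1)) * I) * (2 * I * sin (z + j * π / (m + 1)))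
      = exp (z * I) - exp (-(2 * π * I / (m + 1))) ^ j * exp (-z * I) := by
    rw [two_mul_I_mul_sin, ← exp_nat_mul, mul_sub, ← exp_add, ← exp_add, ← exp_add]
    congr 2 <;> ring
  have hprod : (-I) ^ m * (2 * I) ^ (m + 1) * ∏ j ∈ range (m + 1), sin (z + j * π / (m + 1))
      = 2 * I * sin ((m + 1) * z) := by
    calc _ = ∏ j ∈ range (m + 1),
            exp (-(j * π / (m + 1)) * I) * (2 * I * sin (z + j * π / (m + 1))) := by
          rw [prod_mul_distrib, prod_mul_distrib, prod_const, card_range,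
            prod_exp_neg_mul_pi_div]
          ring
      _ = ∏ j ∈ range (m + 1),
            (exp (z * I) - exp (-(2 * π * I / (m + 1))) ^ j * exp (-z * I)) :=
          prod_congr rfl fun j _ ↦ hfactor j
      _ = exp (z * I) ^ (m + 1) - exp (-z * I) ^ (m + 1) :=
          hζ.prod_range_sub_pow_mul m.succ_pos _ _
      _ = 2 * I * sin ((m + 1) * z) := by
          rw [two_mul_I_mul_sin, ← exp_nat_mul, ← exp_nat_mul]; push_cast; ring_nf
  have hunit : (-I) ^ m * (2 * I) ^ (m + 1) = 2 * I * 2 ^ m := by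
    have h : (-I) ^ m * I ^ m = 1 := by rw [← mul_pow, neg_mul, I_mul_I, neg_neg, one_pow]
    linear_combination (2 * I * 2 ^ m) * h
  rw [hunit, mul_assoc] at hprod
  exact mul_left_cancel₀ (mul_ne_zero two_ne_zero I_ne_zero) hprod

end Complex

theorem Real.prod_sin_add_mul_pi_div (m : ℕ) (x : ℝ) :
    2 ^ m * ∏ j ∈ range (m + 1), sin (x + j * π / (m + 1)) = sin ((m + 1) * x) := by
  exact_mod_cast Complex.prod_sin_add_mul_pi_div m x

theorem sin_prod_eq_cos (k : ℕ) (hk : Odd k) (α : ℝ) :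
    ∏ j ∈ Finset.Icc 1 k, Real.sin (π * (2 * (j : ℝ) - 1) / (2 * k) - α)
      = (2 : ℝ) ^ ((1 : ℤ) - (k : ℤ)) * Real.cos (k * α) := by
  obtain ⟨m, rfl⟩ := Nat.exists_eq_add_one_of_ne_zero hk.pos.ne'
  have hshift (j : ℕ) : π * (2 * ((1 + j : ℕ) : ℝ) - 1) / (2 * ((m + 1 : ℕ) : ℝ)) - α
      = π / (2 * (m + 1)) - α + j * π / (m + 1) := by
    push_cast; field_simp; ring
  have hcos : sin ((m + 1) * (π / (2 * (m + 1)) - α)) = cos ((m + 1 : ℕ) * α) := by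
    rw [← sin_pi_div_two_sub]; push_cast; congr 1; field_simp
  have hpow : (2 : ℝ) ^ ((1 : ℤ) - (m + 1 : ℕ)) = (2 ^ m)⁻¹ := by
    rw [Nat.cast_succ, sub_add_cancel_right, zpow_neg, zpow_natCast]
  rw [← Finset.Ico_add_one_right_eq_Icc, prod_Ico_eq_prod_range, Nat.add_sub_cancel]
  simp only [hshift]
  rw [hpow, ← hcos, ← Real.prod_sin_add_mul_pi_div, inv_mul_cancel_left₀ (by positivity)]
end

section
/- Let h be a natural number and Q(x₁,x₂) = Σ_{j=0}^{h} c_j x₁^j x₂^{h−j} be a homogeneous polynomial of degree at most h in two real variables with real coefficients. If there exist an angle θ̄ ∈ [0,2π) and an odd natural number k with k > h such that Q(cos(θ̄ + 2πj/k), sin(θ̄ + 2πj/k)) = 0 for every j = 0, 1, …, k−1, then Q is identically zero, i.e. c_j = 0 for all j. -/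
open Real Finset

/-!
Put `x = (w + 1) / 2`, `y = (w - 1) / (2i)`. This turns `Q(x, y)` into a polynomial `P(w)` of degree
at most `h`, and on the unit circle `w = e^{2iα}` one has `(x, y) = e^{iα} (cos α, sin α)`, so
`P(e^{2iα}) = e^{ihα} Q(cos α, sin α)`. Since `k` is odd, the points `e^{2iα_j}` for the `k`
equally spaced angles `α_j` are still pairwise distinct (doubling permutes the `k`-th roots of
unity), so `P` has `k > h` roots and vanishes. The substitution is invertible: at
`w = (t + i)/(t - i)` it gives `(x, y) = (t, 1)/(t - i)`, so `∑ c_j t^j` vanishes for all `t ≠ i`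
and every `c_j` is zero.
-/

open Polynomial
open Complex (I)
open scoped Complex

section BinaryForm

variable {R : Type*} [CommSemiring R]

def binaryForm (c : ℕ → R) (h : ℕ) (x y : R) : R :=
  ∑ i ∈ range (h + 1), c i * x ^ i * y ^ (h - i)

theorem binaryForm_mul_mul (c : ℕ → R) (h : ℕ) (r x y : R) :
    binaryForm c h (r * x) (r * y) = r ^ h * binaryForm c h x y := by
  rw [binaryForm, binaryForm, mul_sum]
  refine sum_congr rfl fun i hi => ?_
  rw [mul_pow, mul_pow, ← pow_mul_pow_sub r (Nat.lt_succ_iff.mp (mem_range.mp hi))]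
  ring

theorem map_binaryForm {S : Type*} [CommSemiring S] (f : R →+* S) (c : ℕ → R) (h : ℕ) (x y : R) :
    f (binaryForm c h x y) = binaryForm (f ∘ c) h (f x) (f y) := by
  simp [binaryForm]

theorem binaryForm_one_right (c : ℕ → R) (h : ℕ) (x : R) :
    binaryForm c h x 1 = (∑ i ∈ range (h + 1), C (c i) * X ^ i).eval x := by
  simp [binaryForm, eval_finsetSum]

theorem natDegree_binaryForm_le (c : ℕ → R) (h : ℕ) {p q : R[X]} (hp : p.natDegree ≤ 1)
    (hq : q.natDegree ≤ 1) : (binaryForm (fun i => C (c i)) h p q).natDegree ≤ h := by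
  refine natDegree_sum_le_of_forall_le _ _ fun i hi => ?_
  have hi : i ≤ h := Nat.lt_succ_iff.mp (mem_range.mp hi)
  calc _ ≤ 0 + i * 1 + (h - i) * 1 :=
        natDegree_mul_le_of_le (natDegree_mul_le_of_le (natDegree_C _).le
          (natDegree_pow_le_of_le i hp)) (natDegree_pow_le_of_le _ hq)
    _ = h := by omega

end BinaryForm

noncomputable def cayleyPoly (c : ℕ → ℂ) (h : ℕ) : ℂ[X] :=
  binaryForm (fun i => C (c i)) h ((X + 1) * C 2⁻¹) ((X - 1) * C (2 * I)⁻¹)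

theorem eval_cayleyPoly (c : ℕ → ℂ) (h : ℕ) (w : ℂ) :
    (cayleyPoly c h).eval w = binaryForm c h ((w + 1) / 2) ((w - 1) / (2 * I)) := by
  rw [cayleyPoly, ← coe_evalRingHom, map_binaryForm]
  simp [Function.comp_def, div_eq_mul_inv]

theorem natDegree_cayleyPoly_le (c : ℕ → ℂ) (h : ℕ) : (cayleyPoly c h).natDegree ≤ h :=
  natDegree_binaryForm_le c h (by compute_degree!) (by compute_degree!)

theorem eval_cayleyPoly_exp (c : ℕ → ℂ) (h : ℕ) (α : ℂ) :
    (cayleyPoly c h).eval (cexp (2 * α * I)) =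
      cexp (α * I) ^ h * binaryForm c h (Complex.cos α) (Complex.sin α) := by
  have hinv : cexp (α * I) * cexp (-α * I) = 1 := by rw [← Complex.exp_add]; simp
  have hsq : cexp (2 * α * I) = cexp (α * I) ^ 2 := by
    rw [← Complex.exp_nat_mul]; ring_nf
  have hcos : (cexp (2 * α * I) + 1) / 2 = cexp (α * I) * Complex.cos α := by
    rw [Complex.cos, hsq]
    linear_combination -hinv / 2
  have hsin : (cexp (2 * α * I) - 1) / (2 * I) = cexp (α * I) * Complex.sin α := by
    rw [Complex.sin, hsq, div_eq_iff (by simp)]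
    linear_combination hinv - (cexp (α * I) * cexp (-α * I) - cexp (α * I) ^ 2) * Complex.I_sq
  rw [eval_cayleyPoly, hcos, hsin, binaryForm_mul_mul]

theorem coeff_eq_zero_of_cayleyPoly_eq_zero {c : ℕ → ℂ} {h : ℕ} (hP : cayleyPoly c h = 0) {i : ℕ}
    (hi : i ≤ h) : c i = 0 := by
  set q : ℂ[X] := ∑ i ∈ range (h + 1), C (c i) * X ^ i
  have hroot : ∀ t ≠ I, q.IsRoot t := by
    intro t ht
    have hw : t - I ≠ 0 := sub_ne_zero.mpr ht
    have := eval_cayleyPoly c h ((t + I) / (t - I))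
    rw [hP, eval_zero] at this
    have h1 : ((t + I) / (t - I) + 1) / 2 = (t - I)⁻¹ * t := by field_simp; ring
    have h2 : ((t + I) / (t - I) - 1) / (2 * I) = (t - I)⁻¹ * 1 := by field_simp; ring
    rw [h1, h2, binaryForm_mul_mul, binaryForm_one_right] at this
    simpa [hw] using this.symm
  have hq : q = 0 := eq_zero_of_infinite_isRoot q <|
    (Set.finite_singleton I).infinite_compl.mono fun t ht => hroot t ht
  simpa [q, finsetSum_coeff, Nat.lt_succ_iff.mpr hi] using congr_arg (coeff · i) hq

theorem exp_two_mul_equallySpaced_injective {k : ℕ} (hk : Odd k) (θ : ℂ) :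
    Function.Injective fun j : Fin k => cexp (2 * (θ + 2 * π * j / k) * I) := by
  have hζ := Complex.isPrimitiveRoot_exp_of_coprime 2 k hk.pos.ne' (Nat.coprime_two_left.mpr hk)
  have hpow : ∀ j : ℕ,
      cexp (2 * (θ + 2 * π * j / k) * I) = cexp (2 * θ * I) * cexp (2 * π * I * (2 / k)) ^ j := by
    intro j
    rw [← Complex.exp_nat_mul, ← Complex.exp_add]
    ring_nf
  intro a b hab
  simp only [hpow] at hab
  exact Fin.ext (hζ.pow_inj a.2 b.2 (mul_left_cancel₀ (Complex.exp_ne_zero _) hab))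

theorem coeff_eq_zero_of_binaryForm_eq_zero_on_equallySpaced {c : ℕ → ℂ} {h k : ℕ} (hk : Odd k)
    (hkh : h < k) (θ : ℂ) (hvanish : ∀ j : Fin k, binaryForm c h (Complex.cos (θ + 2 * π * j / k))
      (Complex.sin (θ + 2 * π * j / k)) = 0) {i : ℕ} (hi : i ≤ h) : c i = 0 := by
  refine coeff_eq_zero_of_cayleyPoly_eq_zero ?_ hi
  refine eq_zero_of_natDegree_lt_card_of_eval_eq_zero _
    (exp_two_mul_equallySpaced_injective hk θ) (fun j => ?_) ?_
  · rw [eval_cayleyPoly_exp, hvanish, mul_zero]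
  · simpa using (natDegree_cayleyPoly_le c h).trans_lt hkh

theorem homogeneous_poly_vanishing_on_k_directions_general (h : ℕ) (c : ℕ → ℝ)
    (θ : ℝ)
    (k : ℕ) (hk : Odd k) (hkh : k > h)
    (hvanish : ∀ j : ℕ, j < k →
      ∑ i ∈ Finset.range (h + 1),
        c i * Real.cos (θ + 2 * π * (j : ℝ) / k) ^ i
            * Real.sin (θ + 2 * π * (j : ℝ) / k) ^ (h - i) = 0) :
    ∀ i : ℕ, i ≤ h → c i = 0 := by
  intro i hi
  have hvanishℂ : ∀ j : Fin k, binaryForm (fun i => (c i : ℂ)) h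
      (Complex.cos (θ + 2 * π * j / k)) (Complex.sin (θ + 2 * π * j / k)) = 0 := by
    intro j
    simp only [binaryForm]
    exact_mod_cast hvanish j j.2
  exact_mod_cast coeff_eq_zero_of_binaryForm_eq_zero_on_equallySpaced hk hkh θ hvanishℂ hi

theorem homogeneous_poly_vanishing_on_k_directions (h : ℕ) (c : ℕ → ℝ)
    (θ : ℝ) (hθ₁ : 0 ≤ θ) (hθ₂ : θ < 2 * π)
    (k : ℕ) (hk : Odd k) (hkh : k > h)
    (hvanish : ∀ j : ℕ, j < k →
      ∑ i ∈ Finset.range (h + 1),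
        c i * Real.cos (θ + 2 * π * (j : ℝ) / k) ^ i
            * Real.sin (θ + 2 * π * (j : ℝ) / k) ^ (h - i) = 0) :
    ∀ i : ℕ, i ≤ h → c i = 0 :=
  homogeneous_poly_vanishing_on_k_directions_general h c θ k hk hkh hvanish
end

section
/- Let k be an odd natural number. Then for every j ∈ {0, 1, …, k−1} one has cos(2πj/k) ≠ 0, and the k real numbers tan(2πj/k), j = 0, 1, …, k−1, are pairwise distinct. -/
/-!
An odd multiple of `π / 2` is never of the form `2πj/k` with `k` odd, since that would make
`4j = (2n + 1)k` odd; so all the cosines are nonzero. If two tangents agree, the sine of the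
difference of the angles vanishes, which forces `k ∣ 2(i - j)`, hence `k ∣ i - j` as `k` is odd,
hence `i = j` since `|i - j| < k`.
-/

open Real

lemma sin_sub_eq_zero_of_tan_eq {x y : ℝ} (hx : cos x ≠ 0) (hy : cos y ≠ 0)
    (h : tan x = tan y) : sin (x - y) = 0 := by
  rw [tan_eq_sin_div_cos, tan_eq_sin_div_cos, div_eq_div_iff hx hy] at h
  rw [sin_sub]
  linarith

lemma cos_two_pi_mul_div_ne_zero_of_odd {k : ℕ} (hk : Odd k) (j : ℤ) :
    cos (2 * π * j / k) ≠ 0 := by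
  intro h
  obtain ⟨n, hn⟩ := cos_eq_zero_iff.mp h
  have hk0 : (k : ℝ) ≠ 0 := by exact_mod_cast hk.pos.ne'
  have hcast : ((4 * j : ℤ) : ℝ) = ((2 * n + 1) * k : ℤ) := by
    field_simp at hn
    push_cast
    nlinarith [pi_pos]
  have hodd : Odd (4 * j) :=
    (Int.cast_injective hcast) ▸ (odd_two_mul_add_one n).mul (by exact_mod_cast hk)
  exact Int.not_even_iff_odd.mpr hodd ⟨2 * j, by ring⟩

lemma dvd_of_sin_two_pi_mul_div_eq_zero_of_odd {k : ℕ} (hk : Odd k) {m : ℤ}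
    (h : sin (2 * π * m / k) = 0) : (k : ℤ) ∣ m := by
  obtain ⟨n, hn⟩ := sin_eq_zero_iff.mp h
  have hk0 : (k : ℝ) ≠ 0 := by exact_mod_cast hk.pos.ne'
  have hcast : ((2 * m : ℤ) : ℝ) = (n * k : ℤ) := by
    field_simp at hn
    push_cast
    nlinarith [pi_pos]
  have hdvd : (k : ℤ) ∣ 2 * m := ⟨n, by rw [Int.cast_injective hcast, mul_comm]⟩
  have hcop : IsCoprime (k : ℤ) 2 := by
    exact_mod_cast Nat.isCoprime_iff_coprime.mpr hk.coprime_two_right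
  exact hcop.dvd_of_dvd_mul_left hdvd

theorem cos_ne_zero_and_tan_injective_of_odd (k : ℕ) (hk : Odd k) :
    (∀ j : ℕ, j < k → Real.cos (2 * π * (j : ℝ) / k) ≠ 0) ∧
    (∀ i j : ℕ, i < k → j < k → i ≠ j →
      Real.tan (2 * π * (i : ℝ) / k) ≠ Real.tan (2 * π * (j : ℝ) / k)) := by
  have hcos (j : ℕ) : cos (2 * π * (j : ℝ) / k) ≠ 0 := by
    exact_mod_cast cos_two_pi_mul_div_ne_zero_of_odd hk j
  refine ⟨fun j _ => hcos j, fun i j hi hj hij htan => hij ?_⟩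
  have hsin := sin_sub_eq_zero_of_tan_eq (hcos i) (hcos j) htan
  rw [← sub_div, ← mul_sub] at hsin
  have hdvd : (k : ℤ) ∣ (i - j : ℤ) :=
    dvd_of_sin_two_pi_mul_div_eq_zero_of_odd hk (by exact_mod_cast hsin)
  have hzero := Int.eq_zero_of_abs_lt_dvd hdvd (abs_lt.mpr ⟨by omega, by omega⟩)
  omega
end

section
/- Let k be an odd natural number, c_0, …, c_k real numbers with c_0 > 0, and let g(α) = Σ_{j=0}^{k} c_j (cos α)^{k−j} (sin α)^j. Assume that g(α + 2π/k) = g(α) and g(2π − α) = g(α) for all real α. Then for all real α, g(α) = (c_0 / ∏_{ℓ=1}^{k} sin(π(2ℓ−1)/(2k))) · ∏_{j=1}^{k} sin(π(2j−1)/(2k) − α). -/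
/-!
`g` is the restriction to the circle `(sin α, cos α)` of a binary form of degree `k`, and a
binary form of degree `k` vanishing at `k + 1` pairwise non-proportional points is zero. Since `k`
is odd, `g (α + π) = -g α`; with the period `2π/k` this makes `π/k` an antiperiod, and with the
reflection symmetry `g` is even, so `g` vanishes at the `k` angles `π(2j-1)/(2k)` in `(0, π)`.
The product `∏ⱼ sin (π(2j-1)/(2k) - α)` is a form of degree `k` with the same zeros, so
`(∏ⱼ sin (π(2j-1)/(2k))) • g - c₀ • ∏ⱼ sin (π(2j-1)/(2k) - ·)` vanishes at these angles and at `0`,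
which are `k + 1` directions, hence everywhere.
-/

open Real Finset

open Polynomial

namespace Polynomial

variable {K : Type*} [Field K]

theorem eval_homogenize_of_eq_zero (p : K[X]) (n : ℕ) {x : Fin 2 → K} (hx : x 1 = 0) :
    MvPolynomial.eval x (p.homogenize n) = p.coeff n * x 0 ^ n := by
  rw [homogenize, map_sum, Finset.sum_eq_single (n, 0)]
  · simp [MvPolynomial.eval_monomial]
  · rintro ⟨i, j⟩ hij hne
    have hj : j ≠ 0 := by rintro rfl; simp_all
    simp [MvPolynomial.eval_monomial, hx, hj]
  · simp

/- The points `v i` with `v i 1 ≠ 0` give distinct roots `v i 0 / v i 1` of `p`; at most one point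
has `v i 1 = 0`, and at such a point the form reduces to `p.coeff n * (v i 0) ^ n`. -/
theorem eq_zero_of_eval_homogenize_eq_zero {ι : Type*} {p : K[X]} {n : ℕ}
    (hp : p.natDegree ≤ n) {s : Finset ι} (hs : n < #s) (v : ι → Fin 2 → K)
    (hv : ∀ i ∈ s, ∀ j ∈ s, i ≠ j → v i 0 * v j 1 - v i 1 * v j 0 ≠ 0)
    (h : ∀ i ∈ s, MvPolynomial.eval (v i) (p.homogenize n) = 0) : p = 0 := by
  classical
  by_contra hp0
  set s₁ := s.filter (v · 1 ≠ 0)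
  set s₀ := s.filter (v · 1 = 0)
  have hcard₁ : #s₁ ≤ p.natDegree := by
    have hinj : Set.InjOn (fun i => v i 0 / v i 1) s₁ := by
      intro i hi j hj hij
      simp only [coe_filter, Set.mem_ofPred_eq, s₁] at hi hj
      by_contra hne
      apply hv i hi.1 j hj.1 hne
      rw [div_eq_div_iff hi.2 hj.2] at hij
      linear_combination hij
    rw [← card_image_of_injOn hinj]
    refine card_le_degree_of_subset_roots fun r hr => ?_
    obtain ⟨i, hi, rfl⟩ := mem_image.1 hr
    simp only [mem_filter, s₁] at hi
    have := h i hi.1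
    rw [eval_homogenize hp _ hi.2] at this
    exact (mem_roots hp0).2 ((mul_eq_zero.1 this).resolve_right (pow_ne_zero _ hi.2))
  have hcard₀ : #s₀ ≤ 1 := by
    refine card_le_one.2 fun i hi j hj => ?_
    simp only [mem_filter, s₀] at hi hj
    by_contra hne
    exact hv i hi.1 j hj.1 hne (by simp [hi.2, hj.2])
  have hsplit : #s₀ + #s₁ = #s := card_filter_add_card_filter_not _
  obtain ⟨i, hi⟩ : s₀.Nonempty := by
    rw [← card_pos]; omega
  simp only [mem_filter, s₀] at hi
  have hdeg : p.natDegree = n := by omega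
  have hcoeff : p.coeff n ≠ 0 := by
    rw [← hdeg]; exact leadingCoeff_ne_zero.2 hp0
  have hzero := h i hi.1
  rw [eval_homogenize_of_eq_zero _ _ hi.2, mul_eq_zero, or_iff_right hcoeff,
    pow_eq_zero_iff'] at hzero
  obtain ⟨j, hj, hji⟩ := exists_mem_ne (by omega : 1 < #s) i
  exact hv i hi.1 j hj hji.symm (by simp [hi.2, hzero.1])

end Polynomial

noncomputable def trigForm (p : ℝ[X]) (n : ℕ) (α : ℝ) : ℝ :=
  MvPolynomial.eval ![sin α, cos α] (p.homogenize n)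

theorem trigForm_eq_sum (p : ℝ[X]) (n : ℕ) (α : ℝ) :
    trigForm p n α = ∑ j ∈ range (n + 1), p.coeff j * cos α ^ (n - j) * sin α ^ j := by
  rw [trigForm, homogenize, map_sum, Nat.sum_antidiagonal_eq_sum_range_succ_mk]
  refine sum_congr rfl fun j hj => ?_
  simp [MvPolynomial.eval_monomial]
  ring

theorem trigForm_apply_zero (p : ℝ[X]) (n : ℕ) : trigForm p n 0 = p.coeff 0 := by
  simp [trigForm_eq_sum, sum_range_succ']

theorem trigForm_C_mul (a : ℝ) (p : ℝ[X]) (n : ℕ) (α : ℝ) :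
    trigForm (C a * p) n α = a * trigForm p n α := by
  simp [trigForm]

theorem trigForm_add_pi (p : ℝ[X]) (n : ℕ) (α : ℝ) :
    trigForm p n (α + π) = (-1) ^ n * trigForm p n α := by
  simp only [trigForm_eq_sum, mul_sum, cos_add_pi, sin_add_pi]
  refine sum_congr rfl fun j hj => ?_
  have hsign : (-1 : ℝ) ^ (n - j) * (-1) ^ j = (-1) ^ n := by
    rw [← pow_add, Nat.sub_add_cancel (Nat.lt_succ_iff.1 (mem_range.1 hj))]
  rw [neg_pow, neg_pow, ← hsign]
  ring

theorem natDegree_prod_C_sub_C_mul_X_le {ι : Type*} (s : Finset ι) (a b : ι → ℝ) :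
    (∏ i ∈ s, (C (a i) - C (b i) * X)).natDegree ≤ #s := by
  refine (natDegree_prod_le _ _).trans ((sum_le_card_nsmul s _ 1 fun i _ => ?_).trans (by simp))
  compute_degree

theorem trigForm_prod_sin_sub {ι : Type*} (s : Finset ι) (a : ι → ℝ) (α : ℝ) :
    trigForm (∏ i ∈ s, (C (sin (a i)) - C (cos (a i)) * X)) #s α = ∏ i ∈ s, sin (a i - α) := by
  have hdeg : ∀ i ∈ s, (C (sin (a i)) - C (cos (a i)) * X).natDegree ≤ 1 := fun i _ => by
    compute_degree
  have := homogenize_finsetProd hdeg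
  rw [sum_const, smul_eq_mul, mul_one] at this
  simp [trigForm, this, sin_sub]

theorem eq_of_trigForm_eq {p q : ℝ[X]} {n : ℕ} (hp : p.natDegree ≤ n) (hq : q.natDegree ≤ n)
    {s : Finset ℝ} (hs : ↑s ⊆ Set.Ico 0 π) (hcard : n < #s)
    (h : ∀ θ ∈ s, trigForm p n θ = trigForm q n θ) : p = q := by
  rw [← sub_eq_zero]
  refine eq_zero_of_eval_homogenize_eq_zero ((natDegree_sub_le _ _).trans (max_le hp hq)) hcard
    (fun θ => ![sin θ, cos θ]) (fun θ hθ φ hφ hne => ?_) fun θ hθ => ?_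
  · simp only [Matrix.cons_val_zero, Matrix.cons_val_one, ← sin_sub]
    obtain ⟨hθ₀, hθπ⟩ := hs hθ
    obtain ⟨hφ₀, hφπ⟩ := hs hφ
    rw [Ne, sin_eq_zero_iff_of_lt_of_lt (by linarith) (by linarith), sub_eq_zero]
    exact hne
  · simpa [sub_eq_zero, trigForm] using h θ hθ

theorem trigForm_mul_prod_sin_eq {ι : Type*} {p : ℝ[X]} {n : ℕ} (hp : p.natDegree ≤ n)
    {s : Finset ι} (hs : #s = n) {a : ι → ℝ} (ha : Set.InjOn a s)
    (has : ∀ i ∈ s, a i ∈ Set.Ioo 0 π) (hzero : ∀ i ∈ s, trigForm p n (a i) = 0) (α : ℝ) :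
    trigForm p n α * ∏ i ∈ s, sin (a i) = p.coeff 0 * ∏ i ∈ s, sin (a i - α) := by
  subst hs
  set Q := ∏ i ∈ s, (C (sin (a i)) - C (cos (a i)) * X)
  have h0 : (0 : ℝ) ∉ s.image a := fun h0 => by
    obtain ⟨i, hi, hai⟩ := mem_image.1 h0
    exact (has i hi).1.ne' hai
  have key : C (∏ i ∈ s, sin (a i)) * p = C (p.coeff 0) * Q := by
    refine eq_of_trigForm_eq ((natDegree_C_mul_le _ _).trans hp)
      ((natDegree_C_mul_le _ _).trans (natDegree_prod_C_sub_C_mul_X_le s _ _))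
      (s := insert 0 (s.image a)) ?_ ?_ ?_
    · simp only [coe_insert, coe_image, Set.insert_subset_iff, Set.image_subset_iff]
      exact ⟨⟨le_rfl, pi_pos⟩, fun i hi => Set.Ioo_subset_Ico_self (has i hi)⟩
    · rw [card_insert_of_notMem h0, card_image_of_injOn ha]
      omega
    · intro θ hθ
      rcases mem_insert.1 hθ with rfl | hθ
      · rw [trigForm_C_mul, trigForm_C_mul, trigForm_apply_zero, trigForm_prod_sin_sub]
        simp only [sub_zero, mul_comm]
      · obtain ⟨i, hi, rfl⟩ := mem_image.1 hθ
        rw [trigForm_C_mul, trigForm_C_mul, hzero i hi, trigForm_prod_sin_sub,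
          prod_eq_zero (f := fun j => sin (a j - a i)) hi (by simp)]
        ring
  have := congrArg (fun r => trigForm r #s α) key
  simp only [trigForm_C_mul, Q, trigForm_prod_sin_sub] at this
  linear_combination this

theorem Function.Antiperiodic.eq_zero_of_even {α β : Type*} [DivisionRing α] [NeZero (2 : α)]
    [Ring β] [NoZeroDivisors β] [CharZero β] {f : α → β} {c : α}
    (h : Function.Antiperiodic f c) (hf : f.Even) : f (c / 2) = 0 := by
  have := h (-(c / 2))
  rw [hf, neg_add_eq_sub, sub_half] at this
  exact CharZero.neg_eq_self_iff.1 this.symm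

theorem Function.Antiperiodic.apply_pi_mul_two_mul_sub_one_div_eq_zero {f : ℝ → ℝ} {k : ℕ}
    (hanti : Function.Antiperiodic f π) (hk : Odd k) (hper : Function.Periodic f (2 * π / k))
    (hsym : ∀ α, f (2 * π - α) = f α) (j : ℕ) : f (π * (2 * j - 1) / (2 * k)) = 0 := by
  have hk0 : (k : ℝ) ≠ 0 := by exact_mod_cast hk.pos.ne'
  obtain ⟨m, hm⟩ := hk
  have hanti' : Function.Antiperiodic f (π / k) := by
    have : π / k = -(m * (2 * π / k)) + π := by
      rw [hm]; push_cast; field_simp; ring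
    rw [this]
    exact (hper.nat_mul m).neg.add_antiperiod hanti
  have heven : f.Even := fun α => by
    calc f (-α) = f (-α + k * (2 * π / k)) := (hper.nat_mul k (-α)).symm
      _ = f (2 * π - α) := by congr 1; field_simp; ring
      _ = f α := hsym α
  have h := hanti'.add_int_mul_eq (x := π / k / 2) (j - 1 : ℤ)
  rw [hanti'.eq_zero_of_even heven, mul_zero] at h
  convert h using 2
  push_cast
  field_simp
  ring

theorem pi_mul_two_mul_sub_one_div_mem_Ioo {k j : ℕ} (hj : j ∈ Icc 1 k) :
    π * (2 * j - 1) / (2 * k) ∈ Set.Ioo 0 π := by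
  obtain ⟨hj1, hjk⟩ := mem_Icc.1 hj
  have hj1' : (1 : ℝ) ≤ j := by exact_mod_cast hj1
  have hjk' : (j : ℝ) ≤ k := by exact_mod_cast hjk
  constructor
  · apply div_pos <;> nlinarith [pi_pos]
  · rw [div_lt_iff₀ (by linarith)]; nlinarith [pi_pos]

theorem injective_pi_mul_two_mul_sub_one_div {k : ℕ} (hk : k ≠ 0) :
    Function.Injective fun j : ℕ => π * (2 * j - 1) / (2 * k) := by
  intro i j hij
  have hk' : (2 * k : ℝ) ≠ 0 := by positivity
  rw [div_left_inj' hk', mul_right_inj' pi_ne_zero, sub_left_inj,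
    mul_right_inj' two_ne_zero, Nat.cast_inj] at hij
  exact hij

theorem trig_poly_factorization_general (k : ℕ) (hk : Odd k) (c : ℕ → ℝ)
    (g : ℝ → ℝ)
    (hg : ∀ α : ℝ, g α = ∑ j ∈ Finset.range (k + 1),
      c j * Real.cos α ^ (k - j) * Real.sin α ^ j)
    (hper : ∀ α : ℝ, g (α + 2 * π / k) = g α)
    (hsym : ∀ α : ℝ, g (2 * π - α) = g α) :
    ∀ α : ℝ, g α
      = (c 0 / ∏ l ∈ Finset.Icc 1 k, Real.sin (π * (2 * (l : ℝ) - 1) / (2 * k)))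
        * ∏ j ∈ Finset.Icc 1 k, Real.sin (π * (2 * (j : ℝ) - 1) / (2 * k) - α) := by
  set P : ℝ[X] := ∑ j ∈ range (k + 1), C (c j) * X ^ j
  have hP : P.natDegree ≤ k := natDegree_sum_le_of_forall_le _ _ fun j hj =>
    (natDegree_C_mul_X_pow_le _ _).trans (Nat.lt_succ_iff.1 (mem_range.1 hj))
  have hcoeff : ∀ j ∈ range (k + 1), P.coeff j = c j := fun j hj => by simp [P, hj]
  have hgP : g = trigForm P k := funext fun α => by
    rw [hg, trigForm_eq_sum]
    exact sum_congr rfl fun j hj => by rw [hcoeff j hj]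
  have hanti : Function.Antiperiodic g π := fun α => by
    rw [hgP, trigForm_add_pi, hk.neg_one_pow, neg_one_mul]
  have hzero := hanti.apply_pi_mul_two_mul_sub_one_div_eq_zero hk hper hsym
  have hpos : 0 < ∏ l ∈ Icc 1 k, sin (π * (2 * (l : ℝ) - 1) / (2 * k)) := prod_pos fun l hl =>
    sin_pos_of_pos_of_lt_pi (pi_mul_two_mul_sub_one_div_mem_Ioo hl).1
      (pi_mul_two_mul_sub_one_div_mem_Ioo hl).2
  intro α
  rw [div_mul_eq_mul_div, eq_div_iff hpos.ne', ← hcoeff 0 (by simp), hgP]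
  refine trigForm_mul_prod_sin_eq hP (by simp)
    (injective_pi_mul_two_mul_sub_one_div hk.pos.ne').injOn
    (fun j hj => pi_mul_two_mul_sub_one_div_mem_Ioo hj) (fun j _ => ?_) α
  rw [← hgP]
  exact hzero j

theorem trig_poly_factorization (k : ℕ) (hk : Odd k) (c : ℕ → ℝ) (hc0 : c 0 > 0)
    (g : ℝ → ℝ)
    (hg : ∀ α : ℝ, g α = ∑ j ∈ Finset.range (k + 1),
      c j * Real.cos α ^ (k - j) * Real.sin α ^ j)
    (hper : ∀ α : ℝ, g (α + 2 * π / k) = g α)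
    (hsym : ∀ α : ℝ, g (2 * π - α) = g α) :
    ∀ α : ℝ, g α
      = (c 0 / ∏ l ∈ Finset.Icc 1 k, Real.sin (π * (2 * (l : ℝ) - 1) / (2 * k)))
        * ∏ j ∈ Finset.Icc 1 k, Real.sin (π * (2 * (j : ℝ) - 1) / (2 * k) - α) :=
  trig_poly_factorization_general k hk c g hg hper hsym
end

section
/- Let k be an odd natural number, c_0, …, c_k real numbers with c_0 ≠ 0, and g(α) = Σ_{j=0}^{k} c_j (cos α)^{k−j} (sin α)^j. Suppose θ_1, …, θ_k are k pairwise distinct points of the open interval (0, π) with g(θ_j) = 0 for every j = 1, …, k. Then for all real α, g(α) = c_0 ∏_{j=1}^{k} ( sin(θ_j − α) / sin θ_j ). -/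
/-!
Since `g(α) = (sin α)^k · P(cot α)` with `P(t) = Σ c_j t^(k-j)`, the numbers `cot θ_j` are `k`
distinct roots of `P`, a polynomial of degree at most `k` whose `t^k`-coefficient is `c_0`.
Hence `P = c_0 ∏ (t - cot θ_j)`, i.e. `Σ c_j x^(k-j) y^j = c_0 ∏ (x - cot θ_j · y)` for all
`x, y`, and at `(x, y) = (cos α, sin α)` each factor is `sin (θ_j - α) / sin θ_j`.
-/

open Real Finset Polynomial

namespace Polynomial

variable {R : Type*} [CommRing R] [IsDomain R]

theorem eq_C_coeff_mul_prod_X_sub_C {ι : Type*} {p : R[X]} (s : Finset ι) {r : ι → R}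
    (hr : Set.InjOn r s) (hdeg : p.natDegree ≤ #s) (hroot : ∀ i ∈ s, p.eval (r i) = 0) :
    p = C (p.coeff #s) * ∏ i ∈ s, (X - C (r i)) := by
  have hmonic : (∏ i ∈ s, (X - C (r i))).Monic := monic_prod_of_monic _ _ fun i _ => monic_X_sub_C _
  have hprod_deg : (∏ i ∈ s, (X - C (r i))).natDegree = #s := by
    simp [natDegree_prod_of_monic _ _ fun i _ => monic_X_sub_C (r i)]
  refine eq_of_degree_sub_lt_of_eval_index_eq s hr ?_ fun i hi => ?_
  · rw [degree_lt_iff_coeff_zero]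
    intro m hm
    rcases hm.eq_or_lt with rfl | hlt
    · rw [coeff_sub, coeff_C_mul, ← hprod_deg, hmonic.coeff_natDegree, mul_one, sub_self]
    · rw [coeff_sub, coeff_eq_zero_of_natDegree_lt (hdeg.trans_lt hlt),
        coeff_eq_zero_of_natDegree_lt ((natDegree_C_mul_le _ _).trans_lt (hprod_deg ▸ hlt)),
        sub_zero]
  · simp [hroot i hi, eval_prod, prod_eq_zero hi]

end Polynomial

section BinaryForm

variable {K : Type*} [Field K]

noncomputable def dehomogenize (c : ℕ → K) (k : ℕ) : K[X] :=
  ∑ j ∈ range (k + 1), C (c j) * X ^ (k - j)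

theorem natDegree_dehomogenize_le (c : ℕ → K) (k : ℕ) : (dehomogenize c k).natDegree ≤ k :=
  natDegree_sum_le_of_forall_le _ _ fun _ _ =>
    (natDegree_C_mul_le _ _).trans ((natDegree_X_pow _).le.trans (Nat.sub_le _ _))

theorem coeff_dehomogenize_self (c : ℕ → K) (k : ℕ) : (dehomogenize c k).coeff k = c 0 := by
  rw [dehomogenize, finsetSum_coeff, sum_eq_single 0]
  · simp
  · intro j hj hj0
    rw [coeff_C_mul, coeff_X_pow, if_neg (by grind), mul_zero]
  · simp

theorem sum_mul_pow_mul_pow_eq_pow_mul_eval_dehomogenize (c : ℕ → K) (k : ℕ) (x : K) {y : K}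
    (hy : y ≠ 0) :
    ∑ j ∈ range (k + 1), c j * x ^ (k - j) * y ^ j = y ^ k * (dehomogenize c k).eval (x / y) := by
  simp only [dehomogenize, eval_finsetSum, eval_mul, eval_C, eval_pow, eval_X, mul_sum]
  refine sum_congr rfl fun j hj => ?_
  obtain ⟨i, rfl⟩ := Nat.exists_eq_add_of_le (Nat.le_of_lt_succ (mem_range.mp hj))
  rw [Nat.add_sub_cancel_left, div_pow, pow_add]
  field_simp

theorem sum_mul_pow_mul_pow_eq_mul_prod {ι : Type*} (c : ℕ → K) {k : ℕ} (s : Finset ι)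
    (hs : #s = k) {r : ι → K} (hr : Set.InjOn r s)
    (hroot : ∀ i ∈ s, (dehomogenize c k).eval (r i) = 0) (x y : K) :
    ∑ j ∈ range (k + 1), c j * x ^ (k - j) * y ^ j = c 0 * ∏ i ∈ s, (x - r i * y) := by
  have hfactor := eq_C_coeff_mul_prod_X_sub_C s hr (hs ▸ natDegree_dehomogenize_le c k) hroot
  rw [hs, coeff_dehomogenize_self] at hfactor
  rcases eq_or_ne y 0 with rfl | hy
  · simp [← hs, sum_range_succ']
  · rw [sum_mul_pow_mul_pow_eq_pow_mul_eval_dehomogenize c _ x hy, hfactor]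
    simp only [eval_mul, eval_C, eval_prod, eval_sub, eval_X]
    rw [← hs, ← prod_const, mul_left_comm, ← prod_mul_distrib]
    congr 1
    refine prod_congr rfl fun i _ => ?_
    field_simp

end BinaryForm

namespace Real

theorem injOn_cot : Set.InjOn cot (Set.Ioo 0 π) := by
  intro x hx y hy hxy
  have hsx := (sin_pos_of_pos_of_lt_pi hx.1 hx.2).ne'
  have hsy := (sin_pos_of_pos_of_lt_pi hy.1 hy.2).ne'
  rw [cot_eq_cos_div_sin, cot_eq_cos_div_sin, div_eq_div_iff hsx hsy] at hxy
  have hsin : sin (y - x) = 0 := by rw [sin_sub]; linarith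
  have := (sin_eq_zero_iff_of_lt_of_lt (by linarith [hx.2, hy.1]) (by linarith [hx.1, hy.2])).mp
    hsin
  linarith

theorem sin_sub_div_sin (θ α : ℝ) (hθ : sin θ ≠ 0) :
    sin (θ - α) / sin θ = cos α - cot θ * sin α := by
  rw [sin_sub, cot_eq_cos_div_sin]
  field_simp

end Real

theorem trig_poly_factorization_via_zeros_general (k : ℕ) (c : ℕ → ℝ)
    (g : ℝ → ℝ)
    (hg : ∀ α : ℝ, g α = ∑ j ∈ Finset.range (k + 1),
      c j * Real.cos α ^ (k - j) * Real.sin α ^ j)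
    (θ : ℕ → ℝ)
    (hθmem : ∀ j : ℕ, 1 ≤ j → j ≤ k → θ j ∈ Set.Ioo 0 π)
    (hθdist : ∀ i j : ℕ, 1 ≤ i → i ≤ k → 1 ≤ j → j ≤ k → i ≠ j → θ i ≠ θ j)
    (hθzero : ∀ j : ℕ, 1 ≤ j → j ≤ k → g (θ j) = 0) :
    ∀ α : ℝ, g α = c 0 * ∏ j ∈ Finset.Icc 1 k, (Real.sin (θ j - α) / Real.sin (θ j)) := by
  have hθmem' : ∀ j ∈ Icc 1 k, θ j ∈ Set.Ioo 0 π := fun j hj =>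
    hθmem j (mem_Icc.mp hj).1 (mem_Icc.mp hj).2
  have hsin : ∀ j ∈ Icc 1 k, sin (θ j) ≠ 0 := fun j hj =>
    (sin_pos_of_pos_of_lt_pi (hθmem' j hj).1 (hθmem' j hj).2).ne'
  have hcard : #(Icc 1 k) = k := by simp
  have hinj : Set.InjOn (fun j => cot (θ j)) (Icc 1 k) := fun i hi j hj hij => by
    by_contra hne
    simp only [coe_Icc, Set.mem_Icc] at hi hj
    exact hθdist i j hi.1 hi.2 hj.1 hj.2 hne
      (injOn_cot (hθmem i hi.1 hi.2) (hθmem j hj.1 hj.2) hij)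
  have hroot : ∀ j ∈ Icc 1 k, (dehomogenize c k).eval (cot (θ j)) = 0 := by
    intro j hj
    have hzero := hθzero j (mem_Icc.mp hj).1 (mem_Icc.mp hj).2
    rw [hg, sum_mul_pow_mul_pow_eq_pow_mul_eval_dehomogenize c k _ (hsin j hj),
      ← cot_eq_cos_div_sin] at hzero
    exact (mul_eq_zero.mp hzero).resolve_left (pow_ne_zero _ (hsin j hj))
  intro α
  rw [hg, prod_congr rfl fun j hj => sin_sub_div_sin (θ j) α (hsin j hj)]
  exact sum_mul_pow_mul_pow_eq_mul_prod c _ hcard hinj hroot _ _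

theorem trig_poly_factorization_via_zeros (k : ℕ) (hk : Odd k) (c : ℕ → ℝ)
    (hc0 : c 0 ≠ 0)
    (g : ℝ → ℝ)
    (hg : ∀ α : ℝ, g α = ∑ j ∈ Finset.range (k + 1),
      c j * Real.cos α ^ (k - j) * Real.sin α ^ j)
    (θ : ℕ → ℝ)
    (hθmem : ∀ j : ℕ, 1 ≤ j → j ≤ k → θ j ∈ Set.Ioo 0 π)
    (hθdist : ∀ i j : ℕ, 1 ≤ i → i ≤ k → 1 ≤ j → j ≤ k → i ≠ j → θ i ≠ θ j)
    (hθzero : ∀ j : ℕ, 1 ≤ j → j ≤ k → g (θ j) = 0) :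
    ∀ α : ℝ, g α = c 0 * ∏ j ∈ Finset.Icc 1 k, (Real.sin (θ j - α) / Real.sin (θ j)) :=
  trig_poly_factorization_via_zeros_general k c g hg θ hθmem hθdist hθzero
end

section
/- Let k ≥ 1 be a natural number, R > 1 a real number, c ∈ ℂ, and υ: [1, R] → ℂ a continuous function, differentiable on (1, R), such that the function r ↦ r^{−k/2} υ(r) has derivative c·r^{−1−k} at every r ∈ (1, R), and such that υ(R) = √π · R^{k/2}. Then for every r ∈ [1, R], υ(r) = r^{k/2} (R^k √π − υ(1))/(R^k − 1) − r^{−k/2} R^k (√π − υ(1))/(R^k − 1). If moreover υ is differentiable at r = R (from the left), then υ'(R) = (k/2) R^{k/2 − 1} ((R^k + 1)√π − 2 υ(1)) / (R^k − 1). -/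
open Real Set

/-!
Adding `(c / k) r ^ (-k)` to `r ^ (-k/2) υ r` gives a function with zero derivative on `(1, R)`,
hence constant on `[1, R]` by continuity. Comparing its values at `R` (boundary condition) and at
`1` determines `c / k` in terms of `υ 1`, and solving for `υ r` gives the formula. Since `υ` agrees
with this explicit formula on `[1, R]` and one-sided derivatives within `Iic R` are unique, `υ'(R)`
is the derivative of the formula at `R`.
-/

theorem exists_eqOn_Icc_add_of_hasDerivAt {E : Type*} [NormedAddCommGroup E] [NormedSpace ℝ E]
    {f g f' : ℝ → E} {a b : ℝ} (hab : a < b)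
    (hf : ContinuousOn f (Icc a b)) (hg : ContinuousOn g (Icc a b))
    (hf' : ∀ x ∈ Ioo a b, HasDerivAt f (f' x) x) (hg' : ∀ x ∈ Ioo a b, HasDerivAt g (f' x) x) :
    ∃ C, EqOn f (g · + C) (Icc a b) := by
  obtain ⟨C, hC⟩ := isOpen_Ioo.exists_eq_add_of_deriv_eq isPreconnected_Ioo
    (fun x hx ↦ (hf' x hx).differentiableAt.differentiableWithinAt)
    (fun x hx ↦ (hg' x hx).differentiableAt.differentiableWithinAt)
    (fun x hx ↦ by simp only [(hf' x hx).deriv, (hg' x hx).deriv])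
  exact ⟨C, hC.of_subset_closure hf (hg.add continuousOn_const) Ioo_subset_Icc_self
    (closure_Ioo hab.ne).ge⟩

theorem rpow_mul_sub_eq_of_hasDerivAt {a b p q : ℝ} {c : ℂ} {υ : ℝ → ℂ}
    (ha : 0 < a) (hab : a < b) (hq : q ≠ 0) (hυ : ContinuousOn υ (Icc a b))
    (hode : ∀ r ∈ Ioo a b,
      HasDerivAt (fun s : ℝ => ((s ^ p : ℝ) : ℂ) * υ s) (c * ((r ^ (q - 1) : ℝ) : ℂ)) r) :
    ∀ r ∈ Icc a b, ((r ^ p : ℝ) : ℂ) * υ r - c / q * ((r ^ q : ℝ) : ℂ)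
      = ((b ^ p : ℝ) : ℂ) * υ b - c / q * ((b ^ q : ℝ) : ℂ) := by
  have hpow : ∀ p : ℝ, ContinuousOn (fun s : ℝ => ((s ^ p : ℝ) : ℂ)) (Icc a b) := fun p ↦
    Complex.continuous_ofReal.comp_continuousOn <|
      continuousOn_id.rpow_const fun x hx ↦ Or.inl (ha.trans_le hx.1).ne'
  have hantideriv : ∀ r ∈ Ioo a b,
      HasDerivAt (fun s : ℝ => c / q * ((s ^ q : ℝ) : ℂ)) (c * ((r ^ (q - 1) : ℝ) : ℂ)) r := by
    intro r hr
    refine (((hasDerivAt_rpow_const (Or.inl (ha.trans hr.1).ne')).ofReal_comp).const_mul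
      (c / q)).congr_deriv ?_
    have hq' : (q : ℂ) ≠ 0 := Complex.ofReal_ne_zero.2 hq
    push_cast
    field_simp
  obtain ⟨C, hC⟩ := exists_eqOn_Icc_add_of_hasDerivAt hab ((hpow p).mul hυ)
    (continuousOn_const.mul (hpow q)) hode hantideriv
  intro r hr
  have hCr := hC hr
  have hCb := hC (right_mem_Icc.2 hab.le)
  simp only [Pi.mul_apply] at hCr hCb
  linear_combination hCr - hCb

theorem hasDerivWithinAt_Iic_unique_of_eqOn_Icc {E : Type*} [NormedAddCommGroup E]
    [NormedSpace ℝ E] {f g : ℝ → E} {f' g' : E} {a b : ℝ} (hab : a < b)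
    (hfg : EqOn f g (Icc a b)) (hf : HasDerivWithinAt f f' (Iic b) b) (hg : HasDerivAt g g' b) :
    f' = g' :=
  (uniqueDiffWithinAt_Iic b).eq_deriv _ hf <| hg.hasDerivWithinAt.congr_of_eventuallyEq
    (Filter.mem_of_superset (Icc_mem_nhdsLE hab) hfg) (hfg (right_mem_Icc.2 hab.le))

theorem eq_of_inv_mul_sub_eq_of_sub_eq {K : Type*} [Field K] {x X s u v w : K} (hx : x ≠ 0)
    (hX : X ≠ 0) (hX1 : X ^ 2 - 1 ≠ 0)
    (hr : x⁻¹ * v - w * (x ^ 2)⁻¹ = s - w * (X ^ 2)⁻¹) (h1 : u - w = s - w * (X ^ 2)⁻¹) :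
    v = x * (X ^ 2 * s - u) / (X ^ 2 - 1) - x⁻¹ * X ^ 2 * (s - u) / (X ^ 2 - 1) := by
  have hw : w = - X ^ 2 * (s - u) / (X ^ 2 - 1) := by
    rw [eq_div_iff hX1]
    field_simp at h1
    linear_combination -h1
  field_simp at hr ⊢
  rw [hw] at hr
  field_simp at hr
  linear_combination hr

theorem rpow_div_two_sq {r : ℝ} (hr : 0 ≤ r) (p : ℝ) : (r ^ (p / 2)) ^ 2 = r ^ p := by
  rw [← rpow_mul_natCast hr]
  norm_num

theorem eq_of_hasDerivAt_rpow_neg_half_mul {k R : ℝ} {c β : ℂ} {υ : ℝ → ℂ} (hk : k ≠ 0)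
    (hR : 1 < R) (hcont : ContinuousOn υ (Icc 1 R))
    (hode : ∀ r ∈ Ioo 1 R,
      HasDerivAt (fun s : ℝ => ((s ^ (-k / 2) : ℝ) : ℂ) * υ s) (c * ((r ^ (-1 - k) : ℝ) : ℂ)) r)
    (hbc : υ R = β * ((R ^ (k / 2) : ℝ) : ℂ)) :
    ∀ r ∈ Icc 1 R,
      υ r = ((r ^ (k / 2) : ℝ) : ℂ) * (((R ^ k : ℝ) : ℂ) * β - υ 1) / (((R ^ k : ℝ) : ℂ) - 1)
        - ((r ^ (-k / 2) : ℝ) : ℂ) * ((R ^ k : ℝ) : ℂ) * (β - υ 1) / (((R ^ k : ℝ) : ℂ) - 1) := by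
  have hR0 : 0 < R := one_pos.trans hR
  set X : ℂ := ((R ^ (k / 2) : ℝ) : ℂ) with hXdef
  have hX : X ≠ 0 := Complex.ofReal_ne_zero.2 (rpow_pos_of_pos hR0 _).ne'
  have hRk : ((R ^ k : ℝ) : ℂ) = X ^ 2 := by
    rw [hXdef, ← Complex.ofReal_pow, rpow_div_two_sq hR0.le]
  have hX1 : X ^ 2 - 1 ≠ 0 := by
    rw [← hRk, sub_ne_zero, ← Complex.ofReal_one, Ne, Complex.ofReal_inj]
    exact fun h ↦ hk ((rpow_right_inj hR0 hR.ne').1 (h.trans (rpow_zero R).symm))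
  have first_integral : ∀ r ∈ Icc 1 R,
      ((r ^ (k / 2) : ℝ) : ℂ)⁻¹ * υ r - c / -(k : ℂ) * (((r ^ (k / 2) : ℝ) : ℂ) ^ 2)⁻¹
        = β - c / -(k : ℂ) * (X ^ 2)⁻¹ := by
    intro r hr
    have h := rpow_mul_sub_eq_of_hasDerivAt one_pos hR (neg_ne_zero.2 hk) hcont
      (fun r hr ↦ (hode r hr).congr_deriv (by ring_nf)) r hr
    have hr0 : 0 ≤ r := zero_le_one.trans hr.1
    rw [neg_div, rpow_neg hr0, rpow_neg hr0, rpow_neg hR0.le, rpow_neg hR0.le,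
      ← rpow_div_two_sq hr0 k, ← rpow_div_two_sq hR0.le k, hbc] at h
    push_cast [← hXdef] at h
    rw [h, mul_comm _ X, inv_mul_cancel_left₀ hX]
  intro r hr
  have h1 := first_integral 1 (left_mem_Icc.2 hR.le)
  simp only [one_rpow, Complex.ofReal_one, inv_one, one_pow, one_mul, mul_one] at h1
  have hr0 : 0 < r := one_pos.trans_le hr.1
  rw [hRk, neg_div, rpow_neg hr0.le, Complex.ofReal_inv]
  exact eq_of_inv_mul_sub_eq_of_sub_eq (Complex.ofReal_ne_zero.2 (rpow_pos_of_pos hr0 _).ne') hX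
    hX1 (first_integral r hr) h1

theorem hasDerivAt_rpow_half_mul_sub_rpow_neg_half_mul {R : ℝ} (hR : 0 < R) (k : ℝ) (β u : ℂ) :
    HasDerivAt (fun r : ℝ ↦
        ((r ^ (k / 2) : ℝ) : ℂ) * (((R ^ k : ℝ) : ℂ) * β - u) / (((R ^ k : ℝ) : ℂ) - 1)
        - ((r ^ (-k / 2) : ℝ) : ℂ) * ((R ^ k : ℝ) : ℂ) * (β - u) / (((R ^ k : ℝ) : ℂ) - 1))
      ((k : ℂ) / 2 * ((R ^ (k / 2 - 1) : ℝ) : ℂ) * ((((R ^ k : ℝ) : ℂ) + 1) * β - 2 * u)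
        / (((R ^ k : ℝ) : ℂ) - 1)) R := by
  have hpow : ∀ p : ℝ, HasDerivAt (fun r : ℝ ↦ ((r ^ p : ℝ) : ℂ)) ((p * R ^ (p - 1) : ℝ) : ℂ) R :=
    fun p ↦ (hasDerivAt_rpow_const (Or.inl hR.ne')).ofReal_comp
  refine ((((hpow _).mul_const _).div_const _).sub ((((hpow _).mul_const _).mul_const _).div_const
    _)).congr_deriv ?_
  have hE : R ^ (-k / 2 - 1) * R ^ k = R ^ (k / 2 - 1) := by
    rw [← rpow_add hR]
    ring_nf
  rw [← hE]
  push_cast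
  ring

theorem fourier_coefficient_ode_general (k : ℕ) (hk : 1 ≤ k) (R : ℝ) (hR : 1 < R)
    (c : ℂ) (υ : ℝ → ℂ)
    (hcont : ContinuousOn υ (Set.Icc 1 R))
    (hode : ∀ r ∈ Set.Ioo (1 : ℝ) R,
      HasDerivAt (fun s : ℝ => (s ^ (-(k : ℝ) / 2) : ℝ) * υ s)
        (c * (r ^ (-1 - (k : ℝ)) : ℝ)) r)
    (hbc : υ R = (Real.sqrt π : ℝ) * (R ^ ((k : ℝ) / 2) : ℝ)) :
    (∀ r ∈ Set.Icc (1 : ℝ) R,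
      υ r = ((r ^ ((k : ℝ) / 2) : ℝ) : ℂ)
              * (((R ^ k : ℝ) : ℂ) * (Real.sqrt π : ℝ) - υ 1) / (((R ^ k : ℝ) : ℂ) - 1)
           - ((r ^ (-(k : ℝ) / 2) : ℝ) : ℂ)
              * ((R ^ k : ℝ) : ℂ) * ((Real.sqrt π : ℝ) - υ 1) / (((R ^ k : ℝ) : ℂ) - 1)) ∧
    (∀ d : ℂ, HasDerivWithinAt υ d (Set.Iic R) R →
      d = ((k : ℂ) / 2) * ((R ^ ((k : ℝ) / 2 - 1) : ℝ) : ℂ)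
            * ((((R ^ k : ℝ) : ℂ) + 1) * (Real.sqrt π : ℝ) - 2 * υ 1)
            / (((R ^ k : ℝ) : ℂ) - 1)) := by
  have formula := eq_of_hasDerivAt_rpow_neg_half_mul (Nat.cast_ne_zero.2 (by omega)) hR hcont hode
    hbc
  rw [← rpow_natCast R k, ← Complex.ofReal_natCast]
  exact ⟨formula, fun d hd ↦ hasDerivWithinAt_Iic_unique_of_eqOn_Icc hR (fun r hr ↦ formula r hr)
    hd (hasDerivAt_rpow_half_mul_sub_rpow_neg_half_mul (one_pos.trans hR) _ _ _)⟩

theorem fourier_coefficient_ode (k : ℕ) (hk : 1 ≤ k) (R : ℝ) (hR : 1 < R)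
    (c : ℂ) (υ : ℝ → ℂ)
    (hcont : ContinuousOn υ (Set.Icc 1 R))
    (hdiff : DifferentiableOn ℝ υ (Set.Ioo 1 R))
    (hode : ∀ r ∈ Set.Ioo (1 : ℝ) R,
      HasDerivAt (fun s : ℝ => (s ^ (-(k : ℝ) / 2) : ℝ) * υ s)
        (c * (r ^ (-1 - (k : ℝ)) : ℝ)) r)
    (hbc : υ R = (Real.sqrt π : ℝ) * (R ^ ((k : ℝ) / 2) : ℝ)) :
    (∀ r ∈ Set.Icc (1 : ℝ) R,
      υ r = ((r ^ ((k : ℝ) / 2) : ℝ) : ℂ)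
              * (((R ^ k : ℝ) : ℂ) * (Real.sqrt π : ℝ) - υ 1) / (((R ^ k : ℝ) : ℂ) - 1)
           - ((r ^ (-(k : ℝ) / 2) : ℝ) : ℂ)
              * ((R ^ k : ℝ) : ℂ) * ((Real.sqrt π : ℝ) - υ 1) / (((R ^ k : ℝ) : ℂ) - 1)) ∧
    (∀ d : ℂ, HasDerivWithinAt υ d (Set.Iic R) R →
      d = ((k : ℂ) / 2) * ((R ^ ((k : ℝ) / 2 - 1) : ℝ) : ℂ)
            * ((((R ^ k : ℝ) : ℂ) + 1) * (Real.sqrt π : ℝ) - 2 * υ 1)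
            / (((R ^ k : ℝ) : ℂ) - 1)) :=
  fourier_coefficient_ode_general k hk R hR c υ hcont hode hbc
end

section
/- Let k be an odd natural number, c_0, …, c_k real numbers with c_0 > 0, and g(α) = Σ_{j=0}^{k} c_j (cos α)^{k−j} (sin α)^j. Assume that g(α + 2π/k) = g(α) and g(2π − α) = g(α) for all real α. Then g(α) = c_0 cos(kα) for all real α. -/
/-!
With `w = exp (2 * α * I)`, `(2 * exp (α * I)) ^ k * g α = P w` for a polynomial `P` of degree
at most `k`. The period `2π/k` of `g` makes `P` invariant under `w ↦ ζ * w` with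
`ζ = exp (4πI/k)`, a primitive `k`-th root of unity because `k` is odd, so
`P = a + b * X ^ k`, i.e.
`2 ^ k * g α = a * exp (-k * α * I) + b * exp (k * α * I)`. Since `g` is even, averaging over
`±α` gives `g α = g 0 * cos (k * α)`, and `g 0 = c 0`.
-/

open Real Finset Polynomial

namespace Polynomial

variable {R : Type*} [CommRing R] [IsDomain R] {p : R[X]} {ζ : R} {k : ℕ}

theorem coeff_eq_zero_of_comp_C_mul_X_eq_self (hζ : IsPrimitiveRoot ζ k)
    (hp : p.comp (C ζ * X) = p) {n : ℕ} (hn : ¬k ∣ n) : p.coeff n = 0 := by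
  have h : p.coeff n * (ζ ^ n - 1) = 0 := by
    rw [mul_sub_one, ← comp_C_mul_X_coeff, hp, sub_self]
  exact (mul_eq_zero.1 h).resolve_right
    (sub_ne_zero.2 fun h1 => hn ((hζ.pow_eq_one_iff_dvd n).1 h1))

theorem eq_C_add_C_mul_X_pow_of_comp_eq_self (hζ : IsPrimitiveRoot ζ k) (hk : k ≠ 0)
    (hdeg : p.natDegree ≤ k) (hp : p.comp (C ζ * X) = p) :
    p = C (p.coeff 0) + C (p.coeff k) * X ^ k := by
  ext n
  rw [coeff_add, coeff_C, coeff_C_mul_X_pow]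
  rcases eq_or_ne n 0 with rfl | hn0
  · simp [hk.symm]
  rcases eq_or_ne n k with rfl | hnk
  · simp [hn0]
  rw [if_neg hn0, if_neg hnk, add_zero]
  rcases lt_or_gt_of_ne hnk with hlt | hgt
  · exact coeff_eq_zero_of_comp_C_mul_X_eq_self hζ hp
      fun hdvd => hn0 (Nat.eq_zero_of_dvd_of_lt hdvd hlt)
  · exact coeff_eq_zero_of_natDegree_lt (hdeg.trans_lt hgt)

end Polynomial

theorem Polynomial.eq_of_forall_eval_exp_mul_I_eq {p q : ℂ[X]}
    (h : ∀ t : ℝ, p.eval (Complex.exp (t * Complex.I)) = q.eval (Complex.exp (t * Complex.I))) :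
    p = q := by
  refine eq_of_infinite_eval_eq p q (Set.Infinite.mono (s := Metric.sphere 0 1) ?_ ?_)
  · rw [← Complex.range_exp_mul_I]
    rintro _ ⟨t, rfl⟩
    exact h t
  · exact (isPreconnected_sphere (by simp) 0 1).infinite_of_nontrivial
      ⟨1, by simp, -1, by simp, by norm_num⟩

namespace Complex

theorem exp_two_mul_I_add_one (z : ℂ) : exp (2 * z * I) + 1 = 2 * exp (z * I) * cos z := by
  have h : exp (z * I) * exp (-z * I) = 1 := by rw [← exp_add]; simp
  rw [two_mul, add_mul, exp_add]
  linear_combination exp (z * I) * (two_cos z).symm - h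

theorem exp_two_mul_I_sub_one (z : ℂ) : exp (2 * z * I) - 1 = 2 * I * exp (z * I) * sin z := by
  have h : exp (z * I) * exp (-z * I) = 1 := by rw [← exp_add]; simp
  rw [two_mul, add_mul, exp_add]
  linear_combination exp (z * I) * I * (two_sin z).symm + h
    + (exp (z * I) ^ 2 - exp (z * I) * exp (-z * I)) * I_sq

-- From `cos z = (w + 1) / (2 * exp (z * I))` and `sin z = (w - 1) / (2 * I * exp (z * I))`
-- for `w = exp (2 * z * I)`: see `eval_homogTrigPolynomial_exp`.
noncomputable def homogTrigPolynomial (k : ℕ) (c : ℕ → ℂ) : ℂ[X] :=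
  ∑ j ∈ range (k + 1), C (c j * (-I) ^ j) * (X + 1) ^ (k - j) * (X - 1) ^ j

theorem natDegree_homogTrigPolynomial_le (k : ℕ) (c : ℕ → ℂ) :
    (homogTrigPolynomial k c).natDegree ≤ k := by
  refine natDegree_sum_le_of_forall_le _ _ fun j hj => ?_
  have hjk : j ≤ k := Nat.lt_succ_iff.1 (mem_range.1 hj)
  compute_degree
  omega

theorem eval_homogTrigPolynomial_exp (k : ℕ) (c : ℕ → ℂ) (z : ℂ) :
    (homogTrigPolynomial k c).eval (exp (2 * z * I)) =
      2 ^ k * exp (k * z * I) * ∑ j ∈ range (k + 1), c j * cos z ^ (k - j) * sin z ^ j := by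
  simp only [homogTrigPolynomial, eval_finsetSum, eval_mul, eval_pow, eval_C, eval_add,
    eval_sub, eval_X, eval_one, exp_two_mul_I_add_one, exp_two_mul_I_sub_one, mul_sum]
  refine sum_congr rfl fun j hj => ?_
  obtain ⟨m, rfl⟩ := Nat.exists_eq_add_of_le (Nat.lt_succ_iff.1 (mem_range.1 hj))
  have hI : (-I) ^ j * I ^ j = 1 := by rw [← mul_pow]; simp
  rw [Nat.add_sub_cancel_left, mul_assoc _ z, exp_nat_mul]
  linear_combination 2 ^ (j + m) * exp (z * I) ^ (j + m) * c j * cos z ^ m * sin z ^ j * hI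

theorem eq_apply_zero_mul_cos_of_even {f : ℝ → ℂ} {x a b : ℂ}
    (hf : ∀ t : ℝ, exp (x * t * I) * f t = a + b * exp (x * t * I) ^ 2)
    (heven : ∀ t, f (-t) = f t) (t : ℝ) : f t = f 0 * cos (x * t) := by
  have hinv : exp (x * t * I) * exp (x * ↑(-t) * I) = 1 := by rw [← exp_add]; push_cast; simp
  have hcos : 2 * cos (x * t) = exp (x * t * I) + exp (x * ↑(-t) * I) := by
    rw [two_cos]; push_cast; ring_nf
  have h0 := hf 0
  have hneg := hf (-t)
  rw [heven] at hneg
  simp only [ofReal_zero, mul_zero, zero_mul, exp_zero, one_mul, one_pow, mul_one] at h0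
  rw [h0]
  linear_combination (exp (x * ↑(-t) * I) * hf t + exp (x * t * I) * hneg
    + (b * (exp (x * t * I) + exp (x * ↑(-t) * I)) - 2 * f t) * hinv - (a + b) * hcos) / 2

theorem comp_C_mul_X_eq_self_of_periodic {P : ℂ[X]} {k : ℕ} (hk : k ≠ 0) {F : ℝ → ℂ}
    (hP : ∀ t : ℝ, P.eval (exp (2 * t * I)) = exp (k * t * I) * F t)
    (hper : ∀ t : ℝ, F (t + 2 * π / k) = F t) :
    P.comp (C (exp (2 * π * I / k) ^ 2) * X) = P := by
  refine eq_of_forall_eval_exp_mul_I_eq fun t => ?_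
  have h1 : exp (t * I) = exp (2 * ↑(t / 2) * I) := by push_cast; ring_nf
  have h2 : exp (2 * π * I / k) ^ 2 * exp (2 * ↑(t / 2) * I) =
      exp (2 * ↑(t / 2 + 2 * π / k) * I) := by
    rw [← exp_nat_mul, ← exp_add]
    push_cast
    ring_nf
  have h3 : exp (k * ↑(t / 2 + 2 * π / k) * I) = exp (k * ↑(t / 2) * I) := by
    rw [← mul_one (exp (k * ↑(t / 2) * I)), ← exp_two_pi_mul_I, ← exp_add]
    push_cast
    field_simp
  rw [eval_comp, eval_mul, eval_C, eval_X, h1, h2, hP, hP, hper, h3]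

theorem eq_C_add_C_mul_X_pow_of_periodic {P : ℂ[X]} {k : ℕ} (hk : Odd k) {F : ℝ → ℂ}
    (hdeg : P.natDegree ≤ k)
    (hP : ∀ t : ℝ, P.eval (exp (2 * t * I)) = exp (k * t * I) * F t)
    (hper : ∀ t : ℝ, F (t + 2 * π / k) = F t) :
    P = C (P.coeff 0) + C (P.coeff k) * X ^ k :=
  eq_C_add_C_mul_X_pow_of_comp_eq_self
    ((isPrimitiveRoot_exp k hk.pos.ne').pow_of_coprime 2 (Nat.coprime_two_left.2 hk))
    hk.pos.ne' hdeg (comp_C_mul_X_eq_self_of_periodic hk.pos.ne' hP hper)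

end Complex

theorem trig_poly_eq_cos_general (k : ℕ) (hk : Odd k) (c : ℕ → ℝ)
    (g : ℝ → ℝ)
    (hg : ∀ α : ℝ, g α = ∑ j ∈ Finset.range (k + 1),
      c j * Real.cos α ^ (k - j) * Real.sin α ^ j)
    (hper : ∀ α : ℝ, g (α + 2 * π / k) = g α)
    (hsym : ∀ α : ℝ, g (2 * π - α) = g α) :
    ∀ α : ℝ, g α = c 0 * Real.cos (k * α) := by
  set P := Complex.homogTrigPolynomial k fun j => (c j : ℂ)
  have hP (t : ℝ) : P.eval (Complex.exp (2 * t * Complex.I)) =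
      Complex.exp (k * t * Complex.I) * (2 ^ k * g t) := by
    rw [Complex.eval_homogTrigPolynomial_exp, hg]
    push_cast
    ring
  obtain ⟨a, b, hPform⟩ : ∃ a b, P = C a + C b * X ^ k :=
    ⟨_, _, Complex.eq_C_add_C_mul_X_pow_of_periodic hk
      (Complex.natDegree_homogTrigPolynomial_le k _) hP fun t => by rw [hper]⟩
  have heven (t : ℝ) : g (-t) = g t := by
    rw [← hsym t, hg, hg, Real.cos_neg, Real.sin_neg, Real.cos_two_pi_sub, Real.sin_two_pi_sub]
  have hg0 : g 0 = c 0 := by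
    rw [hg, sum_range_succ']
    simp
  intro α
  have hcos := Complex.eq_apply_zero_mul_cos_of_even
    (f := fun t => 2 ^ k * (g t : ℂ)) (x := k) (a := a) (b := b)
    (fun t => by
      rw [← hP, hPform, eval_add, eval_C, eval_mul, eval_C, eval_pow, eval_X,
        ← Complex.exp_nat_mul, ← Complex.exp_nat_mul]
      ring_nf)
    (fun t => by rw [heven]) α
  have h2k : (2 : ℝ) ^ k * g α = 2 ^ k * (c 0 * Real.cos (k * α)) := by
    apply Complex.ofReal_injective
    push_cast
    rw [hcos, hg0]
    ring
  exact mul_left_cancel₀ (by positivity) h2k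

theorem trig_poly_eq_cos (k : ℕ) (hk : Odd k) (c : ℕ → ℝ) (hc0 : c 0 > 0)
    (g : ℝ → ℝ)
    (hg : ∀ α : ℝ, g α = ∑ j ∈ Finset.range (k + 1),
      c j * Real.cos α ^ (k - j) * Real.sin α ^ j)
    (hper : ∀ α : ℝ, g (α + 2 * π / k) = g α)
    (hsym : ∀ α : ℝ, g (2 * π - α) = g α) :
    ∀ α : ℝ, g α = c 0 * Real.cos (k * α) :=
  trig_poly_eq_cos_general k hk c g hg hper hsym
end

section
/- Let k be an odd natural number and g: ℝ → ℝ a function satisfying g(α + 2π/k) = g(α) and g(α + π) = −g(α) for all real α. Suppose that for each j ∈ {1, …, k} there is a unique zero θ_j of g in the open interval ((j−1)π/k, jπ/k). Then θ_j = θ₁ + (j−1)π/k for every j = 1, …, k. -/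
open Real

/-!
Writing `k = 2m + 1`, the antiperiod `π` differs from `π / k` by the period `m · 2π / k`, so
`π / k` is itself an antiperiod of `g`. Hence `θ₁ + (j - 1)π / k` is a zero of `g` lying in the
`j`-th interval, and uniqueness of the zero there identifies it with `θ_j`.
-/

theorem Function.Antiperiodic.div_of_odd {α β : Type*} [Field α] [CharZero α] [InvolutiveNeg β]
    {f : α → β} {c : α} {k : ℕ} (hk : Odd k) (hper : Function.Periodic f (2 * c / k))
    (hanti : Function.Antiperiodic f c) : Function.Antiperiodic f (c / k) := by
  obtain ⟨m, rfl⟩ := hk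
  have hk0 : ((2 * m + 1 : ℕ) : α) ≠ 0 := Nat.cast_ne_zero.mpr (Nat.succ_ne_zero _)
  have hsplit : c / ↑(2 * m + 1) = -(m * (2 * c / ↑(2 * m + 1)) - c) := by
    field_simp
    push_cast
    ring
  rw [hsplit]
  exact ((hper.nat_mul m).sub_antiperiod hanti).neg

theorem zeros_equally_spaced (k : ℕ) (hk : Odd k) (g : ℝ → ℝ)
    (hper : ∀ α : ℝ, g (α + 2 * π / k) = g α)
    (hanti : ∀ α : ℝ, g (α + π) = - g α)
    (θ : ℕ → ℝ)
    (hθmem : ∀ j : ℕ, 1 ≤ j → j ≤ k →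
      ((j : ℝ) - 1) * π / k < θ j ∧ θ j < (j : ℝ) * π / k)
    (hθzero : ∀ j : ℕ, 1 ≤ j → j ≤ k → g (θ j) = 0)
    (hθuniq : ∀ j : ℕ, 1 ≤ j → j ≤ k → ∀ x : ℝ,
      ((j : ℝ) - 1) * π / k < x → x < (j : ℝ) * π / k → g x = 0 → x = θ j) :
    ∀ j : ℕ, 1 ≤ j → j ≤ k → θ j = θ 1 + ((j : ℝ) - 1) * π / k := by
  intro j hj1 hjk
  obtain ⟨i, rfl⟩ : ∃ i, j = i + 1 := ⟨j - 1, by omega⟩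
  have hshift : Function.Antiperiodic g (π / k) := Function.Antiperiodic.div_of_odd hk hper hanti
  obtain ⟨hpos, hlt⟩ : 0 < θ 1 ∧ θ 1 < π / k := by simpa using hθmem 1 le_rfl hk.pos
  have hcast : ((i + 1 : ℕ) : ℝ) - 1 = i := by push_cast; ring
  rw [hcast]
  refine (hθuniq (i + 1) hj1 hjk _ ?_ ?_ ?_).symm
  · rw [hcast]
    linarith
  · have hsucc : ((i + 1 : ℕ) : ℝ) * π / k = i * π / k + π / k := by push_cast; ring
    linarith
  · rw [mul_div_assoc, hshift.add_nat_mul_eq, hθzero 1 le_rfl hk.pos, mul_zero]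
end

section
/- Let k be an odd natural number and g: ℝ → ℝ a function satisfying g(α + 2π/k) = g(α), g(α + π) = −g(α), and g(2π − α) = g(α) for all real α. Suppose that for each j ∈ {1, …, k} there is a unique zero θ_j of g in the open interval ((j−1)π/k, jπ/k), and that θ_j = θ₁ + (j−1)π/k for every j. Then θ₁ = π/(2k), and hence θ_j = (2j−1)π/(2k) for every j = 1, …, k. -/
/-!
Since `k` is odd, the antiperiod `π` and the period `2π/k` combine into the antiperiod `π/k`, and
the reflection symmetry together with the period `2π = k · 2π/k` makes `g` even. Hence
`x ↦ π/k - x` maps zeros of `g` in `(0, π/k)` to zeros there, so the unique one is the midpoint.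
-/

open Real Function Set

theorem Function.Antiperiodic.of_nat_odd_mul {α β : Type*} [Ring α] [Neg β] {f : α → β} {c : α}
    {n : ℕ} (hn : Odd n) (hanti : Antiperiodic f (n * c)) (hper : Periodic f (2 * c)) :
    Antiperiodic f c := by
  obtain ⟨m, rfl⟩ := hn
  have hc : -(m * (2 * c)) + ↑(2 * m + 1) * c = c := by push_cast; noncomm_ring
  simpa only [hc] using (hper.nat_mul m).neg.add_antiperiod hanti

theorem Function.Antiperiodic.eq_half_of_unique_zero {α β : Type*} [Field α] [LinearOrder α]
    [IsStrictOrderedRing α] [NegZeroClass β] {f : α → β} {c θ : α} (hf : Antiperiodic f c)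
    (heven : f.Even) (hθ : θ ∈ Ioo 0 c) (hzero : f θ = 0)
    (huniq : ∀ x ∈ Ioo 0 c, f x = 0 → x = θ) : θ = c / 2 := by
  have hreflect : c - θ = θ :=
    huniq _ ⟨by linarith [hθ.2], by linarith [hθ.1]⟩ (by rw [hf.sub_eq', heven, hzero, neg_zero])
  linarith

theorem first_zero_determined (k : ℕ) (hk : Odd k) (g : ℝ → ℝ)
    (hper : ∀ α : ℝ, g (α + 2 * π / k) = g α)
    (hanti : ∀ α : ℝ, g (α + π) = - g α)
    (hsym : ∀ α : ℝ, g (2 * π - α) = g α)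
    (θ : ℕ → ℝ)
    (hθmem : ∀ j : ℕ, 1 ≤ j → j ≤ k →
      ((j : ℝ) - 1) * π / k < θ j ∧ θ j < (j : ℝ) * π / k)
    (hθzero : ∀ j : ℕ, 1 ≤ j → j ≤ k → g (θ j) = 0)
    (hθuniq : ∀ j : ℕ, 1 ≤ j → j ≤ k → ∀ x : ℝ,
      ((j : ℝ) - 1) * π / k < x → x < (j : ℝ) * π / k → g x = 0 → x = θ j)
    (haligned : ∀ j : ℕ, 1 ≤ j → j ≤ k → θ j = θ 1 + ((j : ℝ) - 1) * π / k) :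
    θ 1 = π / (2 * k) ∧
    ∀ j : ℕ, 1 ≤ j → j ≤ k → θ j = (2 * (j : ℝ) - 1) * π / (2 * k) := by
  have hk1 : 1 ≤ k := hk.pos
  have hk0 : (k : ℝ) ≠ 0 := by positivity
  have hper_div : Periodic g (2 * (π / k)) := fun α => by simpa only [mul_div_assoc] using hper α
  have hanti_div : Antiperiodic g (k * (π / k)) := by rwa [mul_div_cancel₀ _ hk0]
  have hper_two_pi : Periodic g (2 * π) := by
    have h2π : (k : ℝ) * (2 * (π / k)) = 2 * π := by field_simp
    simpa only [h2π] using hper_div.nat_mul k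
  have heven : g.Even := fun α => hper_two_pi.sub_eq'.symm.trans (hsym α)
  have hθ1 : θ 1 = π / k / 2 :=
    (hanti_div.of_nat_odd_mul hk hper_div).eq_half_of_unique_zero heven
      (by simpa using hθmem 1 le_rfl hk1) (hθzero 1 le_rfl hk1)
      fun x hx => hθuniq 1 le_rfl hk1 x (by simpa using hx.1) (by simpa using hx.2)
  refine ⟨by rw [hθ1, div_div, mul_comm], fun j hj1 hjk => ?_⟩
  rw [haligned j hj1 hjk, hθ1]
  field_simp
  ring
end
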